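/- For a convex function u : Ω → ℝ on an open convex set Ω ⊂ ℝⁿ that is differentiable almost everywhere, the subdifferential at any point x is the convex hull of limits of gradients: ∂u(x) = Conv({p : there exist x_k ∈ Dom(∇u) with x_k → x and ∇u(x_k) → p}). -/

import Mathlib

/-!
Limits of gradients are subgradients at `x`, by the gradient inequality and continuity of `u`;
since `∂u(x)` is convex, it contains their convex hull. Conversely, `u` is locally Lipschitz, so
gradients are bounded near `x` and the limiting gradients form a compact set, whose convex hull is
closed (Carathéodory). By Hahn–Banach it then suffices that for every subgradient `p` and
direction `e` some limiting gradient `q` has `⟪e, p⟫ ≤ ⟪e, q⟫`. Differentiability points have full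
measure, hence are dense, so there are such points `yₖ = x + tₖ vₖ` with `tₖ → 0⁺` and `vₖ → e`;
monotonicity of the subdifferential gives `⟪∇u(yₖ) - p, vₖ⟫ ≥ 0`, and a convergent subsequence of
the bounded gradients `∇u(yₖ)` yields `q`.
-/

open Set Filter Topology MeasureTheory

/-- The subdifferential of `u : Ω → ℝ` (relative to the domain `Ω`) at `x`. -/
def subdiffOn {n : ℕ} (Ω : Set (EuclideanSpace ℝ (Fin n)))
    (u : EuclideanSpace ℝ (Fin n) → ℝ) (x : EuclideanSpace ℝ (Fin n)) :
    Set (EuclideanSpace ℝ (Fin n)) :=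
  {p | ∀ y ∈ Ω, u x + (inner ℝ p (y - x) : ℝ) ≤ u y}

theorem IsCompact.convexHull_of_finiteDimensional {E : Type*} [NormedAddCommGroup E]
    [NormedSpace ℝ E] [FiniteDimensional ℝ E] {s : Set E} (hs : IsCompact s) :
    IsCompact (convexHull ℝ s) := by
  set d := Module.finrank ℝ E
  have hcomb : convexHull ℝ s = ⋃ k : Fin (d + 2),
      (fun wz : (Fin k → ℝ) × (Fin k → E) => ∑ i, wz.1 i • wz.2 i) ''
        (stdSimplex ℝ (Fin k) ×ˢ univ.pi fun _ => s) := by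
    refine Subset.antisymm (fun y hy => ?_) (iUnion_subset fun k => ?_)
    · obtain ⟨ι, _, z, w, hzs, hz, hw0, hw1, rfl⟩ := eq_pos_convex_span_of_mem_convexHull hy
      have hcard : Fintype.card ι < d + 2 :=
        Nat.lt_succ_of_le (hz.card_le_finrank_succ.trans
          (Nat.succ_le_succ (Submodule.finrank_le _)))
      set e := Fintype.equivFin ι
      refine mem_iUnion.2 ⟨⟨_, hcard⟩, (w ∘ e.symm, z ∘ e.symm), ⟨⟨fun i => (hw0 _).le, ?_⟩,
        fun i _ => hzs (mem_range_self _)⟩, ?_⟩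
      · simpa [Function.comp] using (e.symm.sum_comp w).trans hw1
      · exact e.symm.sum_comp fun i => w i • z i
    · rintro _ ⟨⟨w, z⟩, ⟨hw, hz⟩, rfl⟩
      exact (convex_convexHull ℝ s).sum_mem (fun i _ => hw.1 i) hw.2
        fun i _ => subset_convexHull ℝ s (hz i (mem_univ i))
  rw [hcomb]
  exact isCompact_iUnion fun k =>
    ((isCompact_stdSimplex ℝ _).prod (isCompact_univ_pi fun _ => hs)).image (by fun_prop)

theorem IsOpen.subset_closure_setOf_ae {X : Type*} [TopologicalSpace X] [MeasurableSpace X]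
    {μ : Measure X} [μ.IsOpenPosMeasure] {s : Set X} {P : X → Prop} (hs : IsOpen s)
    (h : ∀ᵐ y ∂μ, y ∈ s → P y) : s ⊆ closure {y | y ∈ s ∧ P y} :=
  ((Measure.dense_of_ae h).open_subset_closure_inter hs).trans <|
    closure_mono fun _ ⟨hys, hy⟩ => ⟨hys, hy hys⟩

theorem exists_seq_tendsto_of_direction {E : Type*} [NormedAddCommGroup E] [NormedSpace ℝ E]
    {Ω D : Set E} {x : E} (hΩ : IsOpen Ω) (hD : Ω ⊆ closure D) (hx : x ∈ Ω) (e : E) :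
    ∃ (y : ℕ → E) (t : ℕ → ℝ), (∀ k, y k ∈ D ∧ 0 < t k) ∧ Tendsto y atTop (𝓝 x) ∧
      Tendsto (fun k => (t k)⁻¹ • (y k - x)) atTop (𝓝 e) := by
  have hray : ∀ k : ℕ, ∃ t ∈ Ioo (0 : ℝ) (1 / (k + 1)), x + t • e ∈ Ω := by
    intro k
    have hcont : Tendsto (fun t : ℝ => x + t • e) (𝓝[>] 0) (𝓝 x) :=
      (Continuous.tendsto' (by fun_prop) 0 x (by simp)).mono_left nhdsWithin_le_nhds
    exact (Eventually.and (Ioo_mem_nhdsGT (by positivity))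
      (hcont.eventually (hΩ.mem_nhds hx))).exists
  choose t ht htΩ using hray
  have hnear : ∀ k, ∃ y ∈ D, dist (x + t k • e) y < t k / (k + 1) := fun k =>
    Metric.mem_closure_iff.1 (hD (htΩ k)) _ (div_pos (ht k).1 k.cast_add_one_pos)
  choose y hyD hy using hnear
  set v := fun k => (t k)⁻¹ • (y k - x)
  have hv : Tendsto v atTop (𝓝 e) := by
    refine tendsto_iff_norm_sub_tendsto_zero.2 <| squeeze_zero (fun _ => norm_nonneg _)
      (fun k => ?_) tendsto_one_div_add_atTop_nhds_zero_nat
    have hvk : v k - e = (t k)⁻¹ • (y k - (x + t k • e)) := by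
      rw [sub_add_eq_sub_sub, smul_sub _ (y k - x), inv_smul_smul₀ (ht k).1.ne']
    rw [hvk, norm_smul, norm_inv, Real.norm_of_nonneg (ht k).1.le, ← dist_eq_norm, dist_comm,
      inv_mul_le_iff₀ (ht k).1, mul_one_div]
    exact (hy k).le
  have ht0 : Tendsto t atTop (𝓝 0) :=
    squeeze_zero (fun k => (ht k).1.le) (fun k => (ht k).2.le)
      tendsto_one_div_add_atTop_nhds_zero_nat
  have hyx : Tendsto (fun k => x + t k • v k) atTop (𝓝 x) := by
    simpa using (ht0.smul hv).const_add x
  refine ⟨y, t, fun k => ⟨hyD k, (ht k).1⟩, hyx.congr fun k => ?_, hv⟩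
  rw [smul_inv_smul₀ (ht k).1.ne', add_sub_cancel]

theorem ConvexOn.fderiv_sub_le {E : Type*} [NormedAddCommGroup E] [NormedSpace ℝ E] {Ω : Set E}
    {u : E → ℝ} (hu : ConvexOn ℝ Ω u) {x y : E} (hx : x ∈ Ω) (hy : y ∈ Ω)
    (hd : DifferentiableAt ℝ u x) :
    fderiv ℝ u x (y - x) ≤ u y - u x := by
  have hline : ConvexOn ℝ (AffineMap.lineMap x y ⁻¹' Ω) (u ∘ AffineMap.lineMap x y) :=
    hu.comp_affineMap _
  have hderiv : HasDerivAt (u ∘ AffineMap.lineMap x y) (fderiv ℝ u x (y - x)) (0 : ℝ) := by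
    refine HasFDerivAt.comp_hasDerivAt (0 : ℝ) ?_ AffineMap.hasDerivAt_lineMap
    simpa using hd.hasFDerivAt
  simpa [slope_def_field] using
    hline.le_slope_of_hasDerivAt (by simpa using hx) (by simpa using hy) one_pos hderiv

section Gradient

variable {E : Type*} [NormedAddCommGroup E] [InnerProductSpace ℝ E] [CompleteSpace E]

theorem norm_gradient_le_of_lipschitzOn {f : E → ℝ} {x : E} {s : Set E} (hs : s ∈ 𝓝 x)
    {C : NNReal} (hf : LipschitzOnWith C f s) : ‖gradient f x‖ ≤ C := by
  rw [gradient, LinearIsometryEquiv.norm_map]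
  exact norm_fderiv_le_of_lipschitzOn ℝ hs hf

theorem ConvexOn.exists_eventually_norm_gradient_le [FiniteDimensional ℝ E] {Ω : Set E}
    {u : E → ℝ} (hΩ : IsOpen Ω) (hu : ConvexOn ℝ Ω u) {x : E} (hx : x ∈ Ω) :
    ∃ K : ℝ, ∀ᶠ y in 𝓝 x, ‖gradient u y‖ ≤ K := by
  obtain ⟨K, t, ht, hK⟩ := hu.locallyLipschitzOn hΩ hx
  rw [hΩ.nhdsWithin_eq hx] at ht
  exact ⟨K, (eventually_eventually_nhds.2 ht).mono fun y hy =>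
    norm_gradient_le_of_lipschitzOn hy hK⟩

def limitingGradients (Ω : Set E) (u : E → ℝ) (x : E) : Set E :=
  {p | ∃ xs : ℕ → E, (∀ k, xs k ∈ Ω ∧ DifferentiableAt ℝ u (xs k)) ∧
    Tendsto xs atTop (𝓝 x) ∧ Tendsto (fun k => gradient u (xs k)) atTop (𝓝 p)}

theorem limitingGradients_eq_preimage_closure (Ω : Set E) (u : E → ℝ) (x : E) :
    limitingGradients Ω u x = Prod.mk x ⁻¹'
      closure ((fun y => (y, gradient u y)) '' {y | y ∈ Ω ∧ DifferentiableAt ℝ u y}) := by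
  ext p
  rw [mem_preimage, mem_closure_iff_seq_limit]
  constructor
  · rintro ⟨xs, hxs, hx, hp⟩
    exact ⟨fun k => (xs k, gradient u (xs k)), fun k => ⟨xs k, hxs k, rfl⟩, hx.prodMk_nhds hp⟩
  · rintro ⟨zs, hzs, hlim⟩
    choose xs hxs hzs using hzs
    obtain rfl : (fun k => (xs k, gradient u (xs k))) = zs := funext hzs
    exact ⟨xs, hxs, (Prod.tendsto_iff _ _).1 hlim⟩

theorem isClosed_limitingGradients (Ω : Set E) (u : E → ℝ) (x : E) :
    IsClosed (limitingGradients Ω u x) := by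
  rw [limitingGradients_eq_preimage_closure]
  exact isClosed_closure.preimage (by fun_prop)

theorem limitingGradients_subset_closedBall {Ω : Set E} {u : E → ℝ} {x : E} {K : ℝ}
    (hK : ∀ᶠ y in 𝓝 x, ‖gradient u y‖ ≤ K) :
    limitingGradients Ω u x ⊆ Metric.closedBall 0 K := fun _ ⟨_, _, hx, hp⟩ =>
  mem_closedBall_zero_iff.2 <| le_of_tendsto hp.norm (hx.eventually hK)

end Gradient

section Subdifferential

variable {n : ℕ} {Ω : Set (EuclideanSpace ℝ (Fin n))} {u : EuclideanSpace ℝ (Fin n) → ℝ}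
  {x : EuclideanSpace ℝ (Fin n)}

theorem convex_subdiffOn (Ω : Set (EuclideanSpace ℝ (Fin n))) (u : EuclideanSpace ℝ (Fin n) → ℝ)
    (x : EuclideanSpace ℝ (Fin n)) : Convex ℝ (subdiffOn Ω u x) := by
  intro p hp q hq a b ha hb hab y hy
  rw [inner_add_left, real_inner_smul_left, real_inner_smul_left]
  linear_combination a * hp y hy + b * hq y hy + (u y - u x) * hab

theorem ConvexOn.gradient_mem_subdiffOn (hu : ConvexOn ℝ Ω u) (hx : x ∈ Ω)
    (hd : DifferentiableAt ℝ u x) : gradient u x ∈ subdiffOn Ω u x := fun y hy => by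
  have := hu.fderiv_sub_le hx hy hd
  rw [gradient, InnerProductSpace.toDual_symm_apply]
  linarith

theorem inner_sub_nonneg_of_mem_subdiffOn {y p q : EuclideanSpace ℝ (Fin n)} (hx : x ∈ Ω)
    (hy : y ∈ Ω) (hp : p ∈ subdiffOn Ω u x) (hq : q ∈ subdiffOn Ω u y) :
    0 ≤ (inner ℝ (q - p) (y - x) : ℝ) := by
  have hpy := hp y hy
  have hqx := hq x hx
  rw [← neg_sub y x, inner_neg_right] at hqx
  rw [inner_sub_left]
  linarith

theorem ConvexOn.limitingGradients_subset_subdiffOn (hΩ : IsOpen Ω) (hu : ConvexOn ℝ Ω u)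
    (hx : x ∈ Ω) : limitingGradients Ω u x ⊆ subdiffOn Ω u x := by
  rintro p ⟨xs, hxs, hlim, hp⟩ y hy
  have hcont : ContinuousAt u x := (hu.continuousOn hΩ).continuousAt (hΩ.mem_nhds hx)
  exact le_of_tendsto' ((hcont.tendsto.comp hlim).add (hp.inner (hlim.const_sub y)))
    fun k => hu.gradient_mem_subdiffOn (hxs k).1 (hxs k).2 y hy

theorem ConvexOn.exists_mem_limitingGradients_inner_le (hΩ : IsOpen Ω) (hu : ConvexOn ℝ Ω u)
    (hx : x ∈ Ω) (hD : Ω ⊆ closure {y | y ∈ Ω ∧ DifferentiableAt ℝ u y}) {K : ℝ}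
    (hK : ∀ᶠ y in 𝓝 x, ‖gradient u y‖ ≤ K) {p : EuclideanSpace ℝ (Fin n)}
    (hp : p ∈ subdiffOn Ω u x) (e : EuclideanSpace ℝ (Fin n)) :
    ∃ q ∈ limitingGradients Ω u x, (inner ℝ e p : ℝ) ≤ inner ℝ e q := by
  obtain ⟨y, t, hyt, hyx, hdir⟩ := exists_seq_tendsto_of_direction hΩ hD hx e
  have hbdd : ∃ᶠ k in atTop, gradient u (y k) ∈ Metric.closedBall 0 K :=
    ((hyx.eventually hK).mono fun k hk => mem_closedBall_zero_iff.2 hk).frequently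
  obtain ⟨q, -, φ, hφ, hq⟩ := tendsto_subseq_of_frequently_bounded Metric.isBounded_closedBall hbdd
  refine ⟨q, ⟨y ∘ φ, fun k => (hyt (φ k)).1, hyx.comp hφ.tendsto_atTop, hq⟩, ?_⟩
  have hmono : ∀ k, 0 ≤ (inner ℝ (gradient u (y k) - p) ((t k)⁻¹ • (y k - x)) : ℝ) := fun k => by
    rw [real_inner_smul_right]
    exact mul_nonneg (inv_nonneg.2 (hyt k).2.le) <| inner_sub_nonneg_of_mem_subdiffOn hx
      (hyt k).1.1 hp (hu.gradient_mem_subdiffOn (hyt k).1.1 (hyt k).1.2)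
  have hlim := ge_of_tendsto' ((hq.sub_const p).inner (hdir.comp hφ.tendsto_atTop))
    fun k => hmono (φ k)
  rw [inner_sub_left, real_inner_comm e p, real_inner_comm e q] at hlim
  linarith

end Subdifferential

theorem stmt16_general {n : ℕ} (Ω : Set (EuclideanSpace ℝ (Fin n)))
    (hΩo : IsOpen Ω)
    (u : EuclideanSpace ℝ (Fin n) → ℝ) (hu : ConvexOn ℝ Ω u)
    (hdiff : ∀ᵐ y ∂volume, y ∈ Ω → DifferentiableAt ℝ u y)
    (x : EuclideanSpace ℝ (Fin n)) (hx : x ∈ Ω) :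
    subdiffOn Ω u x =
      convexHull ℝ
        {p : EuclideanSpace ℝ (Fin n) |
          ∃ xs : ℕ → EuclideanSpace ℝ (Fin n),
            (∀ k, xs k ∈ Ω ∧ DifferentiableAt ℝ u (xs k)) ∧
            Tendsto xs atTop (𝓝 x) ∧
            Tendsto (fun k => gradient u (xs k)) atTop (𝓝 p)} := by
  change subdiffOn Ω u x = convexHull ℝ (limitingGradients Ω u x)
  obtain ⟨K, hK⟩ := hu.exists_eventually_norm_gradient_le hΩo hx
  have hcompact : IsCompact (convexHull ℝ (limitingGradients Ω u x)) :=
    IsCompact.convexHull_of_finiteDimensional <| Metric.isCompact_of_isClosed_isBounded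
      (isClosed_limitingGradients Ω u x)
      (Metric.isBounded_closedBall.subset (limitingGradients_subset_closedBall hK))
  refine Subset.antisymm (fun p hp => ?_) <|
    convexHull_min (hu.limitingGradients_subset_subdiffOn hΩo hx) (convex_subdiffOn Ω u x)
  rw [← iInter_halfSpaces_eq (convex_convexHull ℝ _) hcompact.isClosed, mem_iInter]
  intro l
  obtain ⟨q, hq, hle⟩ := hu.exists_mem_limitingGradients_inner_le hΩo hx
    (hΩo.subset_closure_setOf_ae hdiff) hK hp ((InnerProductSpace.toDual ℝ _).symm l)
  rw [InnerProductSpace.toDual_symm_apply, InnerProductSpace.toDual_symm_apply] at hle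
  exact ⟨q, subset_convexHull ℝ _ hq, hle⟩

/-- The subdifferential of a convex function is the convex hull of limits of
nearby gradients. -/
theorem stmt16 {n : ℕ} (Ω : Set (EuclideanSpace ℝ (Fin n)))
    (hΩo : IsOpen Ω) (hΩc : Convex ℝ Ω)
    (u : EuclideanSpace ℝ (Fin n) → ℝ) (hu : ConvexOn ℝ Ω u)
    (hdiff : ∀ᵐ y ∂volume, y ∈ Ω → DifferentiableAt ℝ u y)
    (x : EuclideanSpace ℝ (Fin n)) (hx : x ∈ Ω) :
    subdiffOn Ω u x =
      convexHull ℝ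
        {p : EuclideanSpace ℝ (Fin n) |
          ∃ xs : ℕ → EuclideanSpace ℝ (Fin n),
            (∀ k, xs k ∈ Ω ∧ DifferentiableAt ℝ u (xs k)) ∧
            Tendsto xs atTop (𝓝 x) ∧
            Tendsto (fun k => gradient u (xs k)) atTop (𝓝 p)} :=
  stmt16_general Ω hΩo u hu hdiff x hx
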